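/- Let G be a group with elements σ₁, …, σ_k (k ≥ 2) satisfying the braid relations, and let δ_n = σ_n σ_{n−1} ⋯ σ₁. Then δ_k^k = δ_{k−1} · δ_k^{k−1} · σ_{k−1}. -/
import Mathlib


/-- `deltaB σ n = σ n * σ (n-1) * ... * σ 1` (with `deltaB σ 0 = 1`). -/
def deltaB {G : Type*} [Group G] (σ : ℕ → G) (n : ℕ) : G :=
  ((List.range n).map (fun i => σ (n - i))).prod

/-- `gammaB σ n = σ 1 * σ 2 * ... * σ n` (with `gammaB σ 0 = 1`). -/
def gammaB {G : Type*} [Group G] (σ : ℕ → G) (n : ℕ) : G :=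
  ((List.range n).map (fun i => σ (i + 1))).prod

/-- `ascB σ a c = σ a * σ (a+1) * ... * σ (a+c)`. -/
def ascB {G : Type*} [Group G] (σ : ℕ → G) (a c : ℕ) : G :=
  ((List.range (c + 1)).map (fun i => σ (a + i))).prod

section Aux

variable {G : Type*} [Group G]

lemma deltaB_succ (σ : ℕ → G) (n : ℕ) :
    deltaB σ (n + 1) = σ (n + 1) * deltaB σ n := by
  unfold deltaB
  rw [List.range_succ_eq_map, List.map_cons, List.prod_cons, List.map_map]
  simp [Function.comp_def, Nat.succ_sub_succ]

variable {σ : ℕ → G} {k : ℕ}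

lemma commB (hcomm : ∀ i j, 1 ≤ i → i + 1 < j → j ≤ k → σ i * σ j = σ j * σ i) :
    ∀ m j, m + 1 < j → j ≤ k → σ j * deltaB σ m = deltaB σ m * σ j := by
  intro m
  induction m with
  | zero => intro j _ _; simp [deltaB]
  | succ m ih =>
    intro j hj hjk
    rw [deltaB_succ]
    calc σ j * (σ (m + 1) * deltaB σ m)
        = (σ j * σ (m + 1)) * deltaB σ m := (mul_assoc _ _ _).symm
      _ = (σ (m + 1) * σ j) * deltaB σ m := by
            rw [← hcomm (m + 1) j (by omega) (by omega) hjk]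
      _ = σ (m + 1) * (σ j * deltaB σ m) := mul_assoc _ _ _
      _ = σ (m + 1) * (deltaB σ m * σ j) := by rw [ih j (by omega) hjk]
      _ = (σ (m + 1) * deltaB σ m) * σ j := (mul_assoc _ _ _).symm

lemma slideB (hcomm : ∀ i j, 1 ≤ i → i + 1 < j → j ≤ k → σ i * σ j = σ j * σ i)
    (hbraid : ∀ i, 1 ≤ i → i + 1 ≤ k →
      σ i * σ (i + 1) * σ i = σ (i + 1) * σ i * σ (i + 1)) :
    ∀ n j, 2 ≤ j → j ≤ n → n ≤ k → deltaB σ n * σ j = σ (j - 1) * deltaB σ n := by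
  intro n
  induction n with
  | zero => intro j hj hjn _; omega
  | succ n ih =>
    intro j hj hjn hnk
    rcases Nat.lt_or_ge j (n + 1) with hlt | hge
    · -- j ≤ n
      rw [deltaB_succ]
      calc σ (n + 1) * deltaB σ n * σ j
          = σ (n + 1) * (deltaB σ n * σ j) := mul_assoc _ _ _
        _ = σ (n + 1) * (σ (j - 1) * deltaB σ n) := by
              rw [ih j hj (by omega) (by omega)]
        _ = (σ (n + 1) * σ (j - 1)) * deltaB σ n := (mul_assoc _ _ _).symm
        _ = (σ (j - 1) * σ (n + 1)) * deltaB σ n := by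
              rw [hcomm (j - 1) (n + 1) (by omega) (by omega) hnk]
        _ = σ (j - 1) * (σ (n + 1) * deltaB σ n) := mul_assoc _ _ _
    · -- j = n + 1, hence n ≥ 1
      have hjn1 : j = n + 1 := by omega
      subst hjn1
      have hn1 : 1 ≤ n := by omega
      obtain ⟨m, rfl⟩ : ∃ m, n = m + 1 := ⟨n - 1, by omega⟩
      have hcb := commB hcomm m (m + 2) (by omega) hnk
      calc deltaB σ (m + 2) * σ (m + 2)
          = σ (m + 2) * (σ (m + 1) * deltaB σ m) * σ (m + 2) := by
              rw [deltaB_succ, deltaB_succ]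
        _ = σ (m + 2) * σ (m + 1) * (deltaB σ m * σ (m + 2)) := by
              simp [mul_assoc]
        _ = σ (m + 2) * σ (m + 1) * (σ (m + 2) * deltaB σ m) := by rw [← hcb]
        _ = (σ (m + 2) * σ (m + 1) * σ (m + 2)) * deltaB σ m := by
              simp [mul_assoc]
        _ = (σ (m + 1) * σ (m + 2) * σ (m + 1)) * deltaB σ m := by
              rw [← hbraid (m + 1) (by omega) (by omega)]
        _ = σ (m + 1) * (σ (m + 2) * (σ (m + 1) * deltaB σ m)) := by
              simp [mul_assoc]
        _ = σ (m + 2 - 1) * deltaB σ (m + 2) := by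
              rw [deltaB_succ, deltaB_succ]
              simp

lemma shiftB (hcomm : ∀ i j, 1 ≤ i → i + 1 < j → j ≤ k → σ i * σ j = σ j * σ i)
    (hbraid : ∀ i, 1 ≤ i → i + 1 ≤ k →
      σ i * σ (i + 1) * σ i = σ (i + 1) * σ i * σ (i + 1)) :
    ∀ m j, m < j → j ≤ k → (deltaB σ k) ^ m * σ j = σ (j - m) * (deltaB σ k) ^ m := by
  intro m
  induction m with
  | zero => intro j _ _; simp
  | succ m ih =>
    intro j hj hjk
    rw [pow_succ]
    calc (deltaB σ k) ^ m * deltaB σ k * σ j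
        = (deltaB σ k) ^ m * (deltaB σ k * σ j) := mul_assoc _ _ _
      _ = (deltaB σ k) ^ m * (σ (j - 1) * deltaB σ k) := by
            rw [slideB hcomm hbraid k j (by omega) hjk le_rfl]
      _ = ((deltaB σ k) ^ m * σ (j - 1)) * deltaB σ k := (mul_assoc _ _ _).symm
      _ = (σ (j - 1 - m) * (deltaB σ k) ^ m) * deltaB σ k := by
            rw [ih (j - 1) (by omega) (by omega)]
      _ = σ (j - (m + 1)) * ((deltaB σ k) ^ m * deltaB σ k) := by
            rw [mul_assoc]
            congr 2
            omega

lemma keyB (hcomm : ∀ i j, 1 ≤ i → i + 1 < j → j ≤ k → σ i * σ j = σ j * σ i)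
    (hbraid : ∀ i, 1 ≤ i → i + 1 ≤ k →
      σ i * σ (i + 1) * σ i = σ (i + 1) * σ i * σ (i + 1)) :
    ∀ n, 1 ≤ n → n ≤ k →
      deltaB σ n * deltaB σ n = deltaB σ (n - 1) * deltaB σ n * σ 1 := by
  intro n
  induction n with
  | zero => intro h; omega
  | succ m ih =>
    intro _ hnk
    rcases Nat.eq_zero_or_pos m with hm | hm
    · subst hm
      simp [deltaB, List.range_succ]
    · obtain ⟨p, rfl⟩ : ∃ p, m = p + 1 := ⟨m - 1, by omega⟩
      have hcb := commB hcomm p (p + 2) (by omega) hnk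
      have ihm := ih (by omega) (by omega)
      -- ihm : deltaB σ (p+1) * deltaB σ (p+1) = deltaB σ p * deltaB σ (p+1) * σ 1
      simp only [Nat.add_sub_cancel] at ihm ⊢
      calc deltaB σ (p + 2) * deltaB σ (p + 2)
          = σ (p + 2) * (σ (p + 1) * deltaB σ p) * (σ (p + 2) * deltaB σ (p + 1)) := by
            rw [deltaB_succ, deltaB_succ σ p]
        _ = σ (p + 2) * σ (p + 1) * (deltaB σ p * σ (p + 2)) * deltaB σ (p + 1) := by
            simp [mul_assoc]
        _ = σ (p + 2) * σ (p + 1) * σ (p + 2) * (deltaB σ p * deltaB σ (p + 1)) := by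
            rw [← hcb]; simp [mul_assoc]
        _ = σ (p + 1) * σ (p + 2) * σ (p + 1) * (deltaB σ p * deltaB σ (p + 1)) := by
            rw [← hbraid (p + 1) (by omega) (by omega)]
        _ = σ (p + 1) * σ (p + 2) * ((σ (p + 1) * deltaB σ p) * deltaB σ (p + 1)) := by
            simp [mul_assoc]
        _ = σ (p + 1) * σ (p + 2) * (deltaB σ (p + 1) * deltaB σ (p + 1)) := by
            rw [← deltaB_succ σ p]
        _ = σ (p + 1) * σ (p + 2) * (deltaB σ p * deltaB σ (p + 1) * σ 1) := by
            rw [ihm]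
        _ = σ (p + 1) * (σ (p + 2) * deltaB σ p) * deltaB σ (p + 1) * σ 1 := by
            simp [mul_assoc]
        _ = σ (p + 1) * (deltaB σ p * σ (p + 2)) * deltaB σ (p + 1) * σ 1 := by
            rw [hcb]
        _ = (σ (p + 1) * deltaB σ p) * (σ (p + 2) * deltaB σ (p + 1)) * σ 1 := by
            simp [mul_assoc]
        _ = deltaB σ (p + 1) * deltaB σ (p + 2) * σ 1 := by
            rw [← deltaB_succ σ p, ← deltaB_succ σ (p + 1)]

end Aux

theorem stmt6 {G : Type*} [Group G] (σ : ℕ → G) (k : ℕ) (hk : 2 ≤ k)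
    (hcomm : ∀ i j, 1 ≤ i → i + 1 < j → j ≤ k → σ i * σ j = σ j * σ i)
    (hbraid : ∀ i, 1 ≤ i → i + 1 ≤ k →
      σ i * σ (i + 1) * σ i = σ (i + 1) * σ i * σ (i + 1)) :
    (deltaB σ k) ^ k = deltaB σ (k - 1) * (deltaB σ k) ^ (k - 1) * σ (k - 1) := by
  have hshift := shiftB hcomm hbraid (k - 2) (k - 1) (by omega) (by omega)
  have hkey := keyB hcomm hbraid k (by omega) le_rfl
  have h1 : (k - 1) - (k - 2) = 1 := by omega
  rw [h1] at hshift
  have hpow1 : (deltaB σ k) ^ (k - 1) = deltaB σ k * (deltaB σ k) ^ (k - 2) := by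
    rw [← pow_succ']
    congr 1
    omega
  have hpowk : (deltaB σ k) ^ k =
      (deltaB σ k * deltaB σ k) * (deltaB σ k) ^ (k - 2) := by
    rw [← sq, ← pow_add]
    congr 1
    omega
  calc (deltaB σ k) ^ k
      = (deltaB σ k * deltaB σ k) * (deltaB σ k) ^ (k - 2) := hpowk
    _ = (deltaB σ (k - 1) * deltaB σ k * σ 1) * (deltaB σ k) ^ (k - 2) := by rw [hkey]
    _ = deltaB σ (k - 1) * (deltaB σ k * (σ 1 * (deltaB σ k) ^ (k - 2))) := by
        simp [mul_assoc]
    _ = deltaB σ (k - 1) * (deltaB σ k * ((deltaB σ k) ^ (k - 2) * σ (k - 1))) := by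
        rw [← hshift]
    _ = deltaB σ (k - 1) * (deltaB σ k * (deltaB σ k) ^ (k - 2)) * σ (k - 1) := by
        simp [mul_assoc]
    _ = deltaB σ (k - 1) * (deltaB σ k) ^ (k - 1) * σ (k - 1) := by rw [← hpow1]
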